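/- arXiv:1210.3587 — 2 statements merged into one kernel-verified Lean document; each statement's English description precedes it below -/
import Mathlib

section
/- Let n be a natural number, A a finite set with |A| = 3n, and S a finite family of subsets of A each of cardinality exactly 3. Then the following are equivalent: (i) there exists a subfamily S′ ⊆ S with |S′| = n whose members are pairwise disjoint and whose union is A (an exact 3-cover of A); (ii) there exists a function g : A → S such that a ∈ g(a) for every a ∈ A and the image g(A) has at most n elements. (This equivalence is the combinatorial core of the reduction from Exact Cover by 3-Sets that establishes NP-hardness of the minimum weighted bounded consistent tree problem: a function g as in (ii) corresponds to a bounded consistent tree of total weight at most 4n in the two-level graph whose source points to each S_i and where each S_i points to its three elements, all edges having weight 1.) -/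
/-!
A choice function `g` for an exact cover takes its values in the cover, so its image has at most
`n` members. Conversely the image `T` of `g` covers `A`, so `3n = #A ≤ ∑_{B ∈ T} #B = 3 #T ≤ 3n`;
equality in the union bound forces the members of `T` to be pairwise disjoint and `#T = n`.
-/

open Finset

theorem Finset.pairwiseDisjoint_of_sum_card_le_card_biUnion {ι β : Type*} [DecidableEq ι]
    [DecidableEq β] {s : Finset ι} {t : ι → Finset β}
    (h : ∑ i ∈ s, #(t i) ≤ #(s.biUnion t)) : (s : Set ι).PairwiseDisjoint t := by
  intro i hi j hj hij
  set u := (s.erase i).erase j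
  have hj' : j ∈ s.erase i := mem_erase.2 ⟨hij.symm, hj⟩
  have hsum : ∑ k ∈ s, #(t k) = #(t i) + #(t j) + ∑ k ∈ u, #(t k) := by
    rw [← add_sum_erase s _ hi, ← add_sum_erase _ _ hj', add_assoc]
  have hunion : s.biUnion t = (t i ∪ t j) ∪ u.biUnion t := by
    rw [← insert_erase hi, ← insert_erase hj', biUnion_insert, biUnion_insert, union_assoc]
  have hle : #(s.biUnion t) ≤ #(t i ∪ t j) + ∑ k ∈ u, #(t k) := by
    rw [hunion]
    exact (card_union_le _ _).trans (Nat.add_le_add_left card_biUnion_le _)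
  have hinter := card_union_add_card_inter (t i) (t j)
  exact disjoint_iff_inter_eq_empty.2 (card_eq_zero.1 (by omega))

theorem Finset.pairwiseDisjoint_and_card_sup_eq_of_card_mul_le {β : Type*} [DecidableEq β]
    {T : Finset (Finset β)} {k : ℕ} (hT : ∀ B ∈ T, #B = k) (h : k * #T ≤ #(T.sup id)) :
    (T : Set (Finset β)).PairwiseDisjoint id ∧ #(T.sup id) = k * #T := by
  have hsum : ∑ B ∈ T, #(id B) = k * #T := (sum_const_nat hT).trans (mul_comm _ _)
  have hbound : #(T.sup id) ≤ k * #T := by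
    rw [sup_eq_biUnion, ← hsum]
    exact card_biUnion_le
  rw [sup_eq_biUnion] at h hbound ⊢
  exact ⟨pairwiseDisjoint_of_sum_card_le_card_biUnion (by omega), by omega⟩

/-- The combinatorial core of the reduction from Exact Cover by 3-Sets:
given a set `A` of `3n` elements and a family `S` of 3-element subsets of `A`,
there is an exact 3-cover of `A` by `n` pairwise-disjoint members of `S` iff
there is a function `g : A → S` with `a ∈ g a` for every `a ∈ A` whose image has
at most `n` elements. -/
theorem stmt_4 {α : Type*} [DecidableEq α] (n : ℕ) (A : Finset α)
    (S : Finset (Finset α)) (hA : A.card = 3 * n)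
    (hS : ∀ B ∈ S, B ⊆ A ∧ B.card = 3) :
    (∃ S' ⊆ S, S'.card = n ∧
        (S' : Set (Finset α)).Pairwise (fun B C => Disjoint B C) ∧ S'.sup id = A) ↔
      ∃ g : α → Finset α, (∀ a ∈ A, g a ∈ S ∧ a ∈ g a) ∧ (A.image g).card ≤ n := by
  constructor
  · rintro ⟨S', hS'S, hS'card, -, rfl⟩
    have hcover : ∀ a ∈ S'.sup id, ∃ B ∈ S', a ∈ B := by simp [mem_sup]
    choose! g hgS' hag using hcover
    refine ⟨g, fun a ha ↦ ⟨hS'S (hgS' a ha), hag a ha⟩, hS'card ▸ card_le_card ?_⟩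
    exact image_subset_iff.2 hgS'
  · rintro ⟨g, hg, hcard⟩
    set T := A.image g
    have hTS : T ⊆ S := image_subset_iff.2 fun a ha ↦ (hg a ha).1
    have hTA : T.sup id = A := by
      refine (Finset.sup_le fun B hB ↦ (hS B (hTS hB)).1).antisymm fun a ha ↦ ?_
      exact mem_sup.2 ⟨g a, mem_image_of_mem g ha, (hg a ha).2⟩
    obtain ⟨hdisj, hTcard⟩ := pairwiseDisjoint_and_card_sup_eq_of_card_mul_le
      (fun B hB ↦ (hS B (hTS hB)).2) (k := 3) (by rw [hTA, hA]; omega)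
    exact ⟨T, hTS, by rw [hTA, hA] at hTcard; omega, hdisj, hTA⟩
end

section
/- Let G be a finite directed graph with edge weights w : E → ℝ satisfying 0 < a ≤ w(e) ≤ b for every edge e, let s be a vertex, and let X be a partial observation with (s,0) ∈ X such that every (v,t) ∈ X satisfies that v is reachable from s and dist(s,v) ≤ t. Let T₀ be any shortest-path arborescence of G rooted at s (an arborescence whose vertices are exactly the vertices reachable from s and in which the unique path from s to each vertex v has length dist(s,v)), and let T be the subgraph of T₀ formed by the union of the T₀-paths from s to the vertices occurring in X. Then T is a bounded consistent tree w.r.t. X, and for every bounded consistent tree T* w.r.t. X, the total weight of T satisfies Σ_{e ∈ E(T)} w(e) ≤ |X| · (b/a) · Σ_{e ∈ E(T*)} w(e), where |X| is the number of observation points in X. (This is the approximation guarantee, within factor |X| · (log f_min)/(log f_max), for the minimum weighted bounded consistent tree problem, with w(e) = −log f(e), a = −log f_max, b = −log f_min.) -/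
/-- `IsWalk E u v l`: the nonempty list `l` of vertices is a walk from `u` to `v`
along the edge relation `E` (consecutive vertices are joined by an edge). -/
def IsWalk {V : Type*} (E : V → V → Prop) (u v : V) (l : List V) : Prop :=
  l.head? = some u ∧ l.getLast? = some v ∧ l.Chain' E

/-- The length (number of edges) of a walk given by its list of vertices. -/
def wlen {V : Type*} (l : List V) : ℕ := l.length - 1

/-- `v` is reachable from `u` along the edge relation `E`. -/
def Reach {V : Type*} (E : V → V → Prop) (u v : V) : Prop := ∃ l, IsWalk E u v l

/-- The distance from `u` to `v`: the minimum length of a walk from `u` to `v`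
(equal to `0` by convention when `v` is not reachable from `u`). -/
noncomputable def gdist {V : Type*} (E : V → V → Prop) (u v : V) : ℕ :=
  sInf {n | ∃ l, IsWalk E u v l ∧ wlen l = n}

/-- An arborescence of the graph with edge relation `E`, rooted at `s`:
a subgraph (given by its vertex set and edge relation) containing `s`,
in which every vertex is joined from `s` by a unique path. -/
structure Arb {V : Type*} (E : V → V → Prop) (s : V) where
  verts : Set V
  edges : V → V → Prop
  edges_sub : ∀ u v, edges u v → E u v
  edges_mem : ∀ u v, edges u v → u ∈ verts ∧ v ∈ verts
  root_mem : s ∈ verts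
  unique_walk : ∀ v ∈ verts, ∃! l, IsWalk edges s v l

open Classical in
/-- The total weight of the edges of a subgraph given by an edge relation `R`,
with edge weights `w`. -/
noncomputable def wsum {V : Type*} [Fintype V] (R : V → V → Prop) (w : V → V → ℝ) : ℝ :=
  ∑ p : V × V, if R p.1 p.2 then w p.1 p.2 else 0

/-! Every edge of `T` lies on a `T₀`-path from `s` to an observed vertex `v`, which is a shortest
path, so `T` has at most `∑ dist(s,v)` edges, each of weight at most `b`. Conversely, a consistent
tree `T*` contains a walk from `s` to each observed `v`; shortened to a simple path it still has at
least `dist(s,v)` distinct edges of weight at least `a`, so `a · dist(s,v) ≤ w(T*)`. Walks in `T`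
are walks in `T₀`, so uniqueness of paths in `T` is inherited from `T₀`. -/

section

open Finset

variable {V : Type*}

namespace IsWalk

variable {R R' : V → V → Prop} {u v x y : V} {l l₁ l₂ : List V}

theorem isChain (hw : IsWalk R u v l) : l.IsChain R := hw.2.2

theorem mono (h : ∀ a b, R a b → R' a b) (hw : IsWalk R u v l) : IsWalk R' u v l :=
  ⟨hw.1, hw.2.1, hw.isChain.imp h⟩

theorem getLast_mem (hw : IsWalk R u v l) : v ∈ l := List.mem_of_mem_getLast? hw.2.1

theorem rel_of_infix (hw : IsWalk R u v l) (h : [x, y] <:+: l) : R x y :=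
  List.isChain_pair.mp (hw.isChain.infix h)

theorem forall_mem (hw : IsWalk R u v l) {p : V → Prop} (hu : p u)
    (hR : ∀ a b, R a b → p a → p b) : ∀ x ∈ l, p x := by
  obtain ⟨t, rfl⟩ := List.head?_eq_some_iff.mp hw.1
  exact hw.isChain.induction p _ (fun a b h => hR a b h) fun _ => hu

theorem cons (h : R x u) (hw : IsWalk R u v l) : IsWalk R x v (x :: l) := by
  obtain ⟨t, rfl⟩ := List.head?_eq_some_iff.mp hw.1
  exact ⟨rfl, by simpa using hw.2.1, hw.isChain.cons_cons h⟩

theorem of_append_cons_left (hw : IsWalk R u v (l₁ ++ x :: l₂)) : IsWalk R u x (l₁ ++ [x]) := by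
  refine ⟨?_, by simp, (List.isChain_split.mp hw.isChain).1⟩
  cases l₁ <;> simpa using hw.1

theorem of_append_cons_right (hw : IsWalk R u v (l₁ ++ x :: l₂)) : IsWalk R x v (x :: l₂) := by
  refine ⟨rfl, ?_, (List.isChain_split.mp hw.isChain).2⟩
  simpa [List.getLast?_append] using hw.2.1

theorem exists_nodup (hw : IsWalk R u v l) : ∃ l', IsWalk R u v l' ∧ l'.Nodup := by
  induction l generalizing u with
  | nil => simp [IsWalk] at hw
  | cons x t ih =>
    obtain rfl : x = u := by simpa using hw.1
    cases t with
    | nil => exact ⟨[x], hw, List.nodup_singleton x⟩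
    | cons y r =>
      have hxy : R x y := hw.rel_of_infix ⟨[], r, rfl⟩
      obtain ⟨l', hl', hnd⟩ := ih (of_append_cons_right (l₁ := [x]) hw)
      by_cases hx : x ∈ l'
      · obtain ⟨l₁, l₂, rfl⟩ := List.append_of_mem hx
        exact ⟨x :: l₂, hl'.of_append_cons_right, hnd.sublist (List.sublist_append_right _ _)⟩
      · exact ⟨x :: l', hl'.cons hxy, List.nodup_cons.mpr ⟨hx, hnd⟩⟩

end IsWalk

section Weights

variable [Fintype V] {R R' : V → V → Prop} {w : V → V → ℝ}

open Classical in
noncomputable def edgeFinset (R : V → V → Prop) : Finset (V × V) := {p | R p.1 p.2}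

@[simp]
theorem mem_edgeFinset {p : V × V} : p ∈ edgeFinset R ↔ R p.1 p.2 := by
  simp [edgeFinset]

theorem edgeFinset_mono (h : ∀ a b, R a b → R' a b) : edgeFinset R ⊆ edgeFinset R' :=
  fun _ hp => mem_edgeFinset.mpr (h _ _ (mem_edgeFinset.mp hp))

open Classical in
theorem card_edgeFinset_infix_of_nodup :
    ∀ {l : List V}, l.Nodup → #(edgeFinset fun a b => [a, b] <:+: l) = wlen l
  | [], _ => by simp [edgeFinset, wlen]
  | [x], _ => by
    rw [wlen, List.length_singleton, Nat.sub_self, card_eq_zero, eq_empty_iff_forall_notMem]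
    exact fun _ hp => by simpa using (mem_edgeFinset.mp hp).length_le
  | x :: y :: r, hl => by
    have hins : (edgeFinset fun a b => [a, b] <:+: x :: y :: r) =
        insert (x, y) (edgeFinset fun a b => [a, b] <:+: y :: r) := by
      ext ⟨a, b⟩
      simp [List.infix_cons_iff (l₂ := y :: r)]
    have hxy : (x, y) ∉ edgeFinset fun a b => [a, b] <:+: y :: r := fun h =>
      (List.nodup_cons.mp hl).1 ((mem_edgeFinset.mp h).subset (by simp))
    rw [hins, card_insert_of_notMem hxy, card_edgeFinset_infix_of_nodup hl.of_cons]
    simp [wlen]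

theorem wsum_eq_sum_edgeFinset (R : V → V → Prop) (w : V → V → ℝ) :
    wsum R w = ∑ p ∈ edgeFinset R, w p.1 p.2 := by
  rw [wsum, edgeFinset, sum_filter]

theorem wsum_eq_zero (h : ∀ a b, ¬ R a b) : wsum R w = 0 := by
  simp [wsum, h]

theorem wsum_le_card_mul {b : ℝ} (hw : ∀ x y, R x y → w x y ≤ b) :
    wsum R w ≤ #(edgeFinset R) * b := by
  rw [wsum_eq_sum_edgeFinset, ← nsmul_eq_mul, ← sum_const]
  exact sum_le_sum fun _ hp => hw _ _ (mem_edgeFinset.mp hp)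

theorem sum_le_wsum {F : Finset (V × V)} (hF : F ⊆ edgeFinset R)
    (hw : ∀ x y, R x y → 0 ≤ w x y) : ∑ p ∈ F, w p.1 p.2 ≤ wsum R w := by
  rw [wsum_eq_sum_edgeFinset]
  exact sum_le_sum_of_subset_of_nonneg hF fun _ hp _ => hw _ _ (mem_edgeFinset.mp hp)

theorem mul_wlen_le_wsum {a : ℝ} {u v : V} {l : List V} (ha : 0 ≤ a)
    (hw : ∀ x y, R x y → a ≤ w x y) (hl : IsWalk R u v l) (hnd : l.Nodup) :
    a * wlen l ≤ wsum R w := by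
  have hsub : (edgeFinset fun x y => [x, y] <:+: l) ⊆ edgeFinset R :=
    edgeFinset_mono fun _ _ => hl.rel_of_infix
  calc a * wlen l = ∑ _p ∈ edgeFinset (fun x y => [x, y] <:+: l), a := by
        rw [sum_const, card_edgeFinset_infix_of_nodup hnd, nsmul_eq_mul, mul_comm]
    _ ≤ ∑ p ∈ edgeFinset (fun x y => [x, y] <:+: l), w p.1 p.2 :=
        sum_le_sum fun p hp => hw _ _ (mem_edgeFinset.mp (hsub hp))
    _ ≤ wsum R w := sum_le_wsum hsub fun x y h => ha.trans (hw x y h)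

theorem mul_gdist_le_wsum {E : V → V → Prop} {a : ℝ} {s v : V} (hRE : ∀ x y, R x y → E x y)
    (ha : 0 ≤ a) (hw : ∀ x y, R x y → a ≤ w x y) (hv : Reach R s v) :
    a * gdist E s v ≤ wsum R w := by
  obtain ⟨l, hl, hnd⟩ := hv.choose_spec.exists_nodup
  have hdist : gdist E s v ≤ wlen l := Nat.sInf_le ⟨l, hl.mono hRE, rfl⟩
  calc a * gdist E s v ≤ a * wlen l := by gcongr
    _ ≤ wsum R w := mul_wlen_le_wsum ha hw hl hnd

end Weights

namespace Arb

variable {E : V → V → Prop} {s v : V} (T : Arb E s)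

theorem mem_verts_of_isWalk {l : List V} (hl : IsWalk T.edges s v l) : ∀ x ∈ l, x ∈ T.verts :=
  hl.forall_mem T.root_mem fun _ _ h _ => (T.edges_mem _ _ h).2

theorem isWalk_unique {l₁ l₂ : List V} (h₁ : IsWalk T.edges s v l₁)
    (h₂ : IsWalk T.edges s v l₂) : l₁ = l₂ :=
  (T.unique_walk v (T.mem_verts_of_isWalk h₁ v h₁.getLast_mem)).unique h₁ h₂

theorem nodup_of_isWalk {l : List V} (hl : IsWalk T.edges s v l) : l.Nodup := by
  obtain ⟨l', hl', hnd⟩ := hl.exists_nodup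
  exact T.isWalk_unique hl hl' ▸ hnd

def pathUnion (Y : Set V) (hsY : s ∈ Y) : Arb E s where
  verts := {u | ∃ y ∈ Y, ∃ l, IsWalk T.edges s y l ∧ u ∈ l}
  edges u u' := ∃ y ∈ Y, ∃ l, IsWalk T.edges s y l ∧ [u, u'] <:+: l
  edges_sub u u' := fun ⟨_, _, _, hl, hi⟩ => T.edges_sub u u' (hl.rel_of_infix hi)
  edges_mem u u' := fun ⟨y, hy, l, hl, hi⟩ =>
    ⟨⟨y, hy, l, hl, hi.subset (by simp)⟩, ⟨y, hy, l, hl, hi.subset (by simp)⟩⟩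
  root_mem := by
    obtain ⟨l, hl⟩ := (T.unique_walk s T.root_mem).exists
    exact ⟨s, hsY, l, hl, List.mem_of_mem_head? hl.1⟩
  unique_walk := by
    rintro u ⟨y, hy, l, hl, hu⟩
    obtain ⟨l₁, l₂, rfl⟩ := List.append_of_mem hu
    have hpre : IsWalk T.edges s u (l₁ ++ [u]) := hl.of_append_cons_left
    refine ⟨l₁ ++ [u], ⟨hpre.1, hpre.2.1, (List.isChain_isInfix _).imp ?_⟩, fun l' hl' => ?_⟩
    · exact fun a b hab => ⟨y, hy, _, hl, hab.trans (List.IsPrefix.isInfix ⟨l₂, by simp⟩)⟩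
    · exact T.isWalk_unique (hl'.mono fun _ _ ⟨_, _, _, hm, hi⟩ => hm.rel_of_infix hi) hpre

theorem pathUnion_edges_le {Y : Set V} {hsY : s ∈ Y} {u u' : V}
    (h : (T.pathUnion Y hsY).edges u u') : T.edges u u' :=
  let ⟨_, _, _, hl, hi⟩ := h
  hl.rel_of_infix hi

open Classical in
theorem card_edgeFinset_pathUnion_le [Fintype V] (Y : Finset V) (hsY : s ∈ (Y : Set V))
    (d : V → ℕ) (hd : ∀ y ∈ Y, ∀ l, IsWalk T.edges s y l → wlen l ≤ d y) :
    #(edgeFinset (T.pathUnion Y hsY).edges) ≤ ∑ y ∈ Y, d y := by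
  have hsub : edgeFinset (T.pathUnion Y hsY).edges ⊆
      Y.biUnion fun y => edgeFinset fun u u' => ∃ l, IsWalk T.edges s y l ∧ [u, u'] <:+: l := by
    rintro ⟨u, u'⟩ hp
    obtain ⟨y, hy, l, hl, hi⟩ := mem_edgeFinset.mp hp
    exact mem_biUnion.mpr ⟨y, hy, mem_edgeFinset.mpr ⟨l, hl, hi⟩⟩
  refine (card_le_card hsub).trans (card_biUnion_le.trans (sum_le_sum fun y hy => ?_))
  by_cases hwalk : ∃ l, IsWalk T.edges s y l
  · obtain ⟨l₀, hl₀⟩ := hwalk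
    have hsub₀ : (edgeFinset fun u u' => ∃ l, IsWalk T.edges s y l ∧ [u, u'] <:+: l) ⊆
        edgeFinset fun u u' => [u, u'] <:+: l₀ :=
      edgeFinset_mono fun _ _ ⟨l, hl, hi⟩ => T.isWalk_unique hl hl₀ ▸ hi
    calc _ ≤ #(edgeFinset fun u u' => [u, u'] <:+: l₀) := card_le_card hsub₀
      _ = wlen l₀ := card_edgeFinset_infix_of_nodup (T.nodup_of_isWalk hl₀)
      _ ≤ d y := hd y hy l₀ hl₀
  · simp [edgeFinset, not_exists.mp hwalk]

theorem wsum_pathUnion_le [Fintype V] (Y : Finset V) (hsY : s ∈ (Y : Set V))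
    {w : V → V → ℝ} {b : ℝ} (hb : 0 ≤ b) (hw : ∀ u v, E u v → w u v ≤ b)
    (d : V → ℕ) (hd : ∀ y ∈ Y, ∀ l, IsWalk T.edges s y l → wlen l ≤ d y) :
    wsum (T.pathUnion Y hsY).edges w ≤ b * ∑ y ∈ Y, (d y : ℝ) := by
  calc wsum (T.pathUnion Y hsY).edges w
      ≤ #(edgeFinset (T.pathUnion Y hsY).edges) * b :=
        wsum_le_card_mul fun u v h => hw u v ((T.pathUnion Y hsY).edges_sub u v h)
    _ ≤ (∑ y ∈ Y, d y : ℕ) * b := by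
        gcongr; exact T.card_edgeFinset_pathUnion_le Y hsY d hd
    _ = b * ∑ y ∈ Y, (d y : ℝ) := by push_cast; ring

end Arb

end

/-- Approximation guarantee for the minimum weighted bounded consistent tree problem:
given edge weights `w` with `0 < a ≤ w(e) ≤ b`, a partial observation `X` each of
whose points `(v,t)` satisfies `dist(s,v) ≤ t`, and a shortest-path arborescence
`T₀` rooted at `s`, the union `T` of the `T₀`-paths from `s` to the observed
vertices is a bounded consistent tree w.r.t. `X`, and its weight is at most
`|X| · (b/a)` times the weight of any bounded consistent tree `T*` w.r.t. `X`. -/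
theorem stmt_5 {V : Type*} [Fintype V] (E : V → V → Prop) (w : V → V → ℝ)
    (a b : ℝ) (ha : 0 < a) (hw : ∀ u v, E u v → a ≤ w u v ∧ w u v ≤ b)
    (s : V) (X : Finset (V × ℕ)) (hsX : (s, 0) ∈ X)
    (hX : ∀ p ∈ X, Reach E s p.1 ∧ gdist E s p.1 ≤ p.2)
    (T₀ : Arb E s) (hT₀v : T₀.verts = {v | Reach E s v})
    (hT₀d : ∀ v ∈ T₀.verts, ∀ l, IsWalk T₀.edges s v l → wlen l = gdist E s v) :
    ∃ T : Arb E s,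
      T.verts = {u | ∃ p ∈ X, ∃ l, IsWalk T₀.edges s p.1 l ∧ u ∈ l} ∧
      T.edges = (fun u u' => ∃ p ∈ X, ∃ l, IsWalk T₀.edges s p.1 l ∧ [u, u'] <:+: l) ∧
      (∀ p ∈ X, p.1 ∈ T.verts ∧ ∀ l, IsWalk T.edges s p.1 l → wlen l ≤ p.2) ∧
      ∀ T' : Arb E s,
        (∀ p ∈ X, p.1 ∈ T'.verts ∧ ∀ l, IsWalk T'.edges s p.1 l → wlen l ≤ p.2) →
        wsum T.edges w ≤ X.card * (b / a) * wsum T'.edges w := by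
  classical
  have hXT₀ : ∀ p ∈ X, p.1 ∈ T₀.verts := fun p hp => hT₀v ▸ (hX p hp).1
  have hsY : s ∈ (X.image Prod.fst : Set V) := by simpa using ⟨0, hsX⟩
  refine ⟨T₀.pathUnion _ hsY, by ext; simp [Arb.pathUnion], by ext; simp [Arb.pathUnion],
    fun p hp => ⟨?_, fun l hl => ?_⟩, fun T' hT' => ?_⟩
  · obtain ⟨l, hl⟩ := (T₀.unique_walk p.1 (hXT₀ p hp)).exists
    exact ⟨p.1, by simpa using ⟨p.2, hp⟩, l, hl, hl.getLast_mem⟩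
  · rw [hT₀d p.1 (hXT₀ p hp) l (hl.mono fun _ _ => T₀.pathUnion_edges_le)]
    exact (hX p hp).2
  rcases lt_or_ge b 0 with hb | hb
  · have hE : ∀ u v, ¬ E u v := fun u v h => by linarith [hw u v h]
    rw [wsum_eq_zero fun u v h => hE u v ((T₀.pathUnion _ hsY).edges_sub u v h),
      wsum_eq_zero fun u v h => hE u v (T'.edges_sub u v h), mul_zero]
  have hdist : ∀ y ∈ X.image Prod.fst, (gdist E s y : ℝ) ≤ wsum T'.edges w / a := by
    simp only [Finset.mem_image]
    rintro _ ⟨p, hp, rfl⟩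
    rw [le_div_iff₀' ha]
    exact mul_gdist_le_wsum T'.edges_sub ha.le (fun u v h => (hw u v (T'.edges_sub u v h)).1)
      (T'.unique_walk p.1 (hT' p hp).1).exists
  have hwT'_nonneg : 0 ≤ wsum T'.edges w / a :=
    (Nat.cast_nonneg _).trans (hdist s (by simpa using hsY))
  calc wsum (T₀.pathUnion _ hsY).edges w
      ≤ b * ∑ y ∈ X.image Prod.fst, (gdist E s y : ℝ) :=
        T₀.wsum_pathUnion_le _ hsY hb (fun u v h => (hw u v h).2) _
          fun y _ l hl => (hT₀d y (T₀.mem_verts_of_isWalk hl y hl.getLast_mem) l hl).le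
    _ ≤ b * ((X.image Prod.fst).card * (wsum T'.edges w / a)) := by
        grw [Finset.sum_le_sum hdist, Finset.sum_const, nsmul_eq_mul]
    _ ≤ b * (X.card * (wsum T'.edges w / a)) := by gcongr; exact Finset.card_image_le
    _ = X.card * (b / a) * wsum T'.edges w := by ring
end
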